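/- arXiv:2205.03965 — 2 statements merged into one kernel-verified Lean document; each statement's English description precedes it below -/
import Mathlib

section
/- The graph K₃,₃ − e, obtained from the complete bipartite graph K₃,₃ by deleting one edge, satisfies K₃,₃ − e → (2K₂, C₄): every red-blue colouring of its edges contains either a red matching with 2 edges or a blue 4-cycle. -/
open SimpleGraph

/-- `G` contains a copy of `H`, i.e. there is an injective graph homomorphism from `H` to `G`. -/
def ContainsCopy {V W : Type*} (G : SimpleGraph V) (H : SimpleGraph W) : Prop :=
  ∃ f : H →g G, Function.Injective f

/-- `G` arrows `(G₁, G₂)`: for every red/blue colouring of the edges of `G`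
(given by a subgraph `R ≤ G` of red edges, the blue edges being `G \ R`),
there is a red copy of `G₁` or a blue copy of `G₂`. -/
def Arrows {V V₁ V₂ : Type*} (G : SimpleGraph V) (G₁ : SimpleGraph V₁) (G₂ : SimpleGraph V₂) :
    Prop :=
  ∀ R : SimpleGraph V, R ≤ G → ContainsCopy R G₁ ∨ ContainsCopy (G \ R) G₂

/-- The matching `nK₂` with `n` edges. -/
def Matching (n : ℕ) : SimpleGraph (Fin n × Fin 2) where
  Adj a b := a.1 = b.1 ∧ a.2 ≠ b.2
  symm := by constructor; intro a b h; exact ⟨h.1.symm, h.2.symm⟩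
  loopless := by constructor; intro a h; exact h.2 rfl

/-- `n` disjoint copies of the graph `H`. -/
def Copies (n : ℕ) {W : Type*} (H : SimpleGraph W) : SimpleGraph (Fin n × W) where
  Adj a b := a.1 = b.1 ∧ H.Adj a.2 b.2
  symm := by constructor; intro a b h; exact ⟨h.1.symm, h.2.symm⟩
  loopless := by constructor; intro a h; exact H.loopless.irrefl _ h.2

/-- Disjoint union of two graphs. -/
def DisjUnion {V W : Type*} (G : SimpleGraph V) (H : SimpleGraph W) : SimpleGraph (V ⊕ W) where
  Adj a b :=
    match a, b with
    | Sum.inl x, Sum.inl y => G.Adj x y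
    | Sum.inr x, Sum.inr y => H.Adj x y
    | _, _ => False
  symm := by
    constructor
    rintro (x | x) (y | y) h
    · exact G.adj_symm h
    · exact h.elim
    · exact h.elim
    · exact H.adj_symm h
  loopless := by
    constructor
    rintro (x | x) h
    · exact G.loopless.irrefl _ h
    · exact H.loopless.irrefl _ h

/-- The graph `K₃,₃ − e`: the complete bipartite graph `K₃,₃` with one edge deleted. -/
def K33MinusE : SimpleGraph (Fin 3 ⊕ Fin 3) :=
  (completeBipartiteGraph (Fin 3) (Fin 3)).deleteEdges {s(Sum.inl 0, Sum.inr 0)}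

/-! A red graph without two disjoint edges inside `K₃,₃` is a star, since bipartite graphs have no
triangles. Two vertices on the centre's side other than the centre, and two vertices on the other
side chosen so as to avoid the deleted edge, then span a blue 4-cycle. -/

theorem containsCopy_matching_two {V : Type*} {R : SimpleGraph V} {a b c d : V}
    (hab : R.Adj a b) (hcd : R.Adj c d) (hac : a ≠ c) (had : a ≠ d) (hbc : b ≠ c) (hbd : b ≠ d) :
    ContainsCopy R (Matching 2) := by
  refine ⟨⟨fun p => ![![a, b], ![c, d]] p.1 p.2, ?_⟩, ?_⟩
  · rintro ⟨i, j⟩ ⟨i', j'⟩ ⟨rfl, hj⟩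
    fin_cases i <;> fin_cases j <;> fin_cases j' <;> simp_all [R.adj_comm]
  · rintro ⟨i, j⟩ ⟨i', j'⟩ h
    fin_cases i <;> fin_cases j <;> fin_cases i' <;> fin_cases j' <;>
      simp_all [hab.ne, hcd.ne, eq_comm]

theorem containsCopy_cycleGraph_four {V : Type*} {B : SimpleGraph V} {a b c d : V}
    (hab : B.Adj a b) (hbc : B.Adj b c) (hcd : B.Adj c d) (hda : B.Adj d a)
    (hac : a ≠ c) (hbd : b ≠ d) :
    ContainsCopy B (cycleGraph 4) := by
  refine ⟨⟨![a, b, c, d], ?_⟩, ?_⟩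
  · intro i j hij
    fin_cases i <;> fin_cases j <;> simp_all +decide [B.adj_comm]
  · intro i j h
    fin_cases i <;> fin_cases j <;> simp_all [hab.ne, hbc.ne, hcd.ne, hda.ne', eq_comm]

theorem containsCopy_cycleGraph_four_of_rectangle {α β : Type*} {B : SimpleGraph (α ⊕ β)}
    {i₁ i₂ : α} {j₁ j₂ : β} (hi : i₁ ≠ i₂) (hj : j₁ ≠ j₂)
    (hB : ∀ i j, (i = i₁ ∨ i = i₂) → (j = j₁ ∨ j = j₂) → B.Adj (.inl i) (.inr j)) :
    ContainsCopy B (cycleGraph 4) :=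
  containsCopy_cycleGraph_four (hB _ _ (.inl rfl) (.inl rfl)) (hB _ _ (.inr rfl) (.inl rfl)).symm
    (hB _ _ (.inr rfl) (.inr rfl)) (hB _ _ (.inl rfl) (.inr rfl)).symm
    (by simpa using hi) (by simpa using hj)

theorem exists_fst_or_snd_cover {α β : Type*} [Nonempty α] {r : α → β → Prop}
    (hr : ∀ a b a' b', r a b → r a' b' → a = a' ∨ b = b') :
    (∃ a, ∀ x y, r x y → x = a) ∨ ∃ b, ∀ x y, r x y → y = b := by
  by_cases hne : ∃ a b, r a b
  swap
  · push Not at hne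
    exact .inl ⟨Classical.arbitrary α, fun x y h => (hne x y h).elim⟩
  obtain ⟨a, b, hab⟩ := hne
  by_contra! hcov
  obtain ⟨x, y, hxy, hxa⟩ := hcov.1 a
  obtain ⟨x', y', hxy', hyb⟩ := hcov.2 b
  have hyb' : y = b := (hr x y a b hxy hab).resolve_left hxa
  have hxa' : x' = a := (hr x' y' a b hxy' hab).resolve_right hyb
  subst hyb' hxa'
  exact ((hr x y x' y' hxy hxy').elim hxa (Ne.symm hyb)).elim

theorem Fin.exists_pair_ne_and_ne (a : Fin 3) : ∃ i₁ i₂ : Fin 3, i₁ ≠ i₂ ∧ i₁ ≠ a ∧ i₂ ≠ a := by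
  fin_cases a
  exacts [⟨1, 2, by decide⟩, ⟨0, 2, by decide⟩, ⟨0, 1, by decide⟩]

theorem K33MinusE_adj_inl_inr {i j : Fin 3} :
    K33MinusE.Adj (.inl i) (.inr j) ↔ i ≠ 0 ∨ j ≠ 0 := by
  simp [K33MinusE, completeBipartiteGraph, imp_iff_not_or]

section BlueCycle

variable {R : SimpleGraph (Fin 3 ⊕ Fin 3)}

theorem K33MinusE_sdiff_adj_inl_inr {i j : Fin 3} (hK : i ≠ 0 ∨ j ≠ 0)
    (hR : ¬R.Adj (.inl i) (.inr j)) : (K33MinusE \ R).Adj (.inl i) (.inr j) :=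
  ⟨K33MinusE_adj_inl_inr.2 hK, hR⟩

theorem containsCopy_cycleGraph_four_of_forall_fst_eq {a : Fin 3}
    (ha : ∀ i j, R.Adj (.inl i) (.inr j) → i = a) :
    ContainsCopy (K33MinusE \ R) (cycleGraph 4) := by
  obtain ⟨i₁, i₂, hi, h₁, h₂⟩ := Fin.exists_pair_ne_and_ne a
  refine containsCopy_cycleGraph_four_of_rectangle (j₁ := 1) (j₂ := 2) hi (by decide)
    fun i j hrow hcol => K33MinusE_sdiff_adj_inl_inr (.inr ?_) fun h => ?_
  · rcases hcol with rfl | rfl <;> decide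
  · rcases hrow with rfl | rfl
    exacts [h₁ (ha _ _ h), h₂ (ha _ _ h)]

theorem containsCopy_cycleGraph_four_of_forall_snd_eq {b : Fin 3}
    (hb : ∀ i j, R.Adj (.inl i) (.inr j) → j = b) :
    ContainsCopy (K33MinusE \ R) (cycleGraph 4) := by
  obtain ⟨j₁, j₂, hj, h₁, h₂⟩ := Fin.exists_pair_ne_and_ne b
  refine containsCopy_cycleGraph_four_of_rectangle (i₁ := 1) (i₂ := 2) (by decide) hj
    fun i j hrow hcol => K33MinusE_sdiff_adj_inl_inr (.inl ?_) fun h => ?_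
  · rcases hrow with rfl | rfl <;> decide
  · rcases hcol with rfl | rfl
    exacts [h₁ (hb _ _ h), h₂ (hb _ _ h)]

end BlueCycle

/-- `K₃,₃ − e` arrows `(2K₂, C₄)`: every red-blue colouring of its edges
contains either a red matching with 2 edges or a blue 4-cycle. -/
theorem K33_minus_e_arrows_matching2_cycle4 : Arrows K33MinusE (Matching 2) (cycleGraph 4) := by
  intro R _
  by_cases hmatch : ∃ i₁ j₁ i₂ j₂ : Fin 3, R.Adj (.inl i₁) (.inr j₁) ∧ R.Adj (.inl i₂) (.inr j₂) ∧
      i₁ ≠ i₂ ∧ j₁ ≠ j₂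
  · obtain ⟨i₁, j₁, i₂, j₂, h₁, h₂, hi, hj⟩ := hmatch
    exact .inl (containsCopy_matching_two h₁ h₂ (by simpa) Sum.inl_ne_inr Sum.inr_ne_inl
      (by simpa))
  push Not at hmatch
  right
  rcases exists_fst_or_snd_cover (r := fun i j => R.Adj (.inl i) (.inr j))
    fun a b a' b' h h' => or_iff_not_imp_left.2 (hmatch a b a' b' h h') with ⟨a, ha⟩ | ⟨b, hb⟩
  exacts [containsCopy_cycleGraph_four_of_forall_fst_eq ha,
    containsCopy_cycleGraph_four_of_forall_snd_eq hb]
end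

section
/- Let n be a positive integer and let G be a connected graph with at most 4n−2 edges such that G → (nK₂, C₃). Suppose that for every positive integer k, every connected graph G′ with either fewer vertices than G, or the same number of vertices and fewer edges than G, satisfies G′ ↛ (kK₂, C₃) whenever G′ has at most 4k−2 edges. Then G is 2-connected: G has at least three vertices and for every vertex v of G the graph G − v is connected. -/
/-!
Write `κ(H)` for the largest `m` with `H → (mK₂, C₃)`. Colouring every edge blue shows that `G`
contains a triangle. The invariant `κ` is subadditive over two graphs sharing at most one vertex
(glue optimal colourings), and deleting a vertex lowers it by at most one (colour the star at the
vertex red). Minimality gives `4 κ(H) ≤ e(H) + 1` for every proper connected induced subgraph `H`.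

Suppose `G - v` is disconnected, its vertex set split into `A` and `B` with no edges between them.
Every component of `G - v` sends an edge to `v`, so summing the minimality bound over the
components gives `4 κ(G[A]) ≤ e(G[A + v])`, and likewise for `B`. Now
`n ≤ κ(G) ≤ κ(G[A]) + κ(G[B]) + 1` and `e(G) ≤ 4n - 2` force `e(G[A + v]) ≤ 4 κ(G[A]) + 2`, so
minimality yields `κ(G[A + v]) ≤ κ(G[A])`, and the same for `B`. Hence
`n ≤ κ(G) ≤ κ(G[A + v]) + κ(G[B + v]) ≤ κ(G[A]) + κ(G[B])`, and `4n ≤ e(G) ≤ 4n - 2`.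
-/

open SimpleGraph

section Copies

variable {α β W : Type*} {G G' R R₁ R₂ : SimpleGraph α} {H : SimpleGraph β} {m k m₁ m₂ : ℕ}

theorem containsCopy_iff_isContained : ContainsCopy G H ↔ H ⊑ G :=
  ⟨fun ⟨f, hf⟩ => ⟨⟨f, hf⟩⟩, fun ⟨f⟩ => ⟨f.toHom, f.injective⟩⟩

theorem ContainsCopy.mono (hGG' : G ≤ G') (h : ContainsCopy G H) : ContainsCopy G' H :=
  containsCopy_iff_isContained.2 ((containsCopy_iff_isContained.1 h).mono_right hGG')

theorem ContainsCopy.of_map {K : SimpleGraph W} (f : W ↪ α) (hH : ∀ x, ∃ y, H.Adj x y)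
    (h : ContainsCopy (K.map f) H) : ContainsCopy K H := by
  obtain ⟨g, hg⟩ := h
  have hrange : ∀ x, ∃ w, f w = g x := fun x => by
    obtain ⟨y, hxy⟩ := hH x
    obtain ⟨w, -, -, hw, -⟩ := (map_adj f K _ _).1 (g.map_adj hxy)
    exact ⟨w, hw⟩
  choose g' hg' using hrange
  refine ⟨⟨g', fun {x y} hxy => ?_⟩, fun x y hxy => hg (by rw [← hg', ← hg']; exact congrArg f hxy)⟩
  have := g.map_adj hxy
  rwa [← hg', ← hg', map_adj_apply] at this

theorem containsCopy_matching_iff :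
    ContainsCopy R (Matching m) ↔ ∃ f : Fin m × Fin 2 ↪ α, ∀ i, R.Adj (f (i, 0)) (f (i, 1)) := by
  rw [containsCopy_iff_isContained, isContained_iff_exists_le_comap]
  refine exists_congr fun f => ⟨fun h i => h ⟨rfl, by simp⟩, fun h => ?_⟩
  rintro ⟨i, a⟩ ⟨j, b⟩ ⟨rfl, hab⟩
  fin_cases a <;> fin_cases b
  exacts [absurd rfl hab, h i, (h i).symm, absurd rfl hab]

theorem containsCopy_matching_of_le_card {N : ℕ} (f : Fin N × Fin 2 ↪ α) (s : Finset (Fin N))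
    (hf : ∀ i ∈ s, R.Adj (f (i, 0)) (f (i, 1))) (hm : m ≤ s.card) :
    ContainsCopy R (Matching m) := by
  obtain ⟨t, hts, rfl⟩ := Finset.exists_subset_card_eq hm
  let e : Fin t.card ↪ Fin N := (t.orderEmbOfFin rfl).toEmbedding
  exact containsCopy_matching_iff.2 ⟨(e.prodMap (Function.Embedding.refl _)).trans f,
    fun i => hf _ (hts (t.orderEmbOfFin_mem rfl i))⟩

theorem ContainsCopy.matching_mono (h : ContainsCopy R (Matching m)) (hkm : k ≤ m) :
    ContainsCopy R (Matching k) := by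
  obtain ⟨f, hf⟩ := containsCopy_matching_iff.1 h
  exact containsCopy_matching_of_le_card f Finset.univ (fun i _ => hf i) (by simpa using hkm)

theorem not_containsCopy_matching_sup (h₁ : ¬ContainsCopy R₁ (Matching (m₁ + 1)))
    (h₂ : ¬ContainsCopy R₂ (Matching (m₂ + 1))) :
    ¬ContainsCopy (R₁ ⊔ R₂) (Matching (m₁ + m₂ + 1)) := by
  classical
  intro h
  obtain ⟨f, hf⟩ := containsCopy_matching_iff.1 h
  have hcard := Finset.card_filter_add_card_filter_not
    (s := Finset.univ) fun i => R₁.Adj (f (i, 0)) (f (i, 1))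
  rw [Finset.card_univ, Fintype.card_fin] at hcard
  by_cases hm₁ : m₁ + 1 ≤ (Finset.univ.filter fun i => R₁.Adj (f (i, 0)) (f (i, 1))).card
  · exact h₁ (containsCopy_matching_of_le_card f _ (fun i hi => (Finset.mem_filter.1 hi).2) hm₁)
  · refine h₂ (containsCopy_matching_of_le_card f
      (Finset.univ.filter fun i => ¬R₁.Adj (f (i, 0)) (f (i, 1))) (fun i hi => ?_) (by omega))
    exact (hf i).resolve_left (Finset.mem_filter.1 hi).2

theorem not_containsCopy_bot_matching : ¬ContainsCopy (⊥ : SimpleGraph α) (Matching (m + 1)) :=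
  fun h => by
    obtain ⟨f, hf⟩ := containsCopy_matching_iff.1 h
    exact hf 0

theorem not_containsCopy_matching_two_of_star {v : α} (hS : ∀ x y, R.Adj x y → x = v ∨ y = v) :
    ¬ContainsCopy R (Matching 2) := fun h => by
  obtain ⟨f, hf⟩ := containsCopy_matching_iff.1 h
  have h01 : ∀ i, ∃ a, f (i, a) = v := fun i => (hS _ _ (hf i)).elim (⟨0, ·⟩) (⟨1, ·⟩)
  obtain ⟨a, ha⟩ := h01 0
  obtain ⟨b, hb⟩ := h01 1
  exact absurd (congrArg Prod.fst (f.injective (ha.trans hb.symm))) (by simp)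

theorem containsCopy_cycleGraph_three_iff :
    ContainsCopy G (cycleGraph 3) ↔ ∃ a b c, G.Adj a b ∧ G.Adj a c ∧ G.Adj b c := by
  classical
  rw [containsCopy_iff_isContained, cycleGraph_three_eq_top,
    ← not_cliqueFree_iff_top_isContained, CliqueFree]
  simp only [is3Clique_iff, not_forall, not_not]
  exact ⟨fun ⟨_, a, b, c, h⟩ => ⟨a, b, c, h.1, h.2.1, h.2.2.1⟩,
    fun ⟨a, b, c, h⟩ => ⟨_, a, b, c, h.1, h.2.1, h.2.2, rfl⟩⟩

theorem ContainsCopy.cycleGraph_three_of_sup (hsupp : (R₁.support ∩ R₂.support).Subsingleton)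
    (h : ContainsCopy (R₁ ⊔ R₂) (cycleGraph 3)) :
    ContainsCopy R₁ (cycleGraph 3) ∨ ContainsCopy R₂ (cycleGraph 3) := by
  simp only [containsCopy_cycleGraph_three_iff, sup_adj] at h ⊢
  obtain ⟨a, b, c, hab, hac, hbc⟩ := h
  -- a triangle with edges from both graphs has two distinct vertices in both supports
  have hP : ∀ {x y z w t u}, R₁.Adj x y → R₂.Adj x z → R₁.Adj w t → R₂.Adj w u → x = w :=
    fun h₁ h₂ h₃ h₄ => hsupp ⟨⟨_, h₁⟩, ⟨_, h₂⟩⟩ ⟨⟨_, h₃⟩, ⟨_, h₄⟩⟩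
  rcases hab with hab | hab <;> rcases hac with hac | hac <;> rcases hbc with hbc | hbc
  all_goals first
    | exact Or.inl ⟨a, b, c, hab, hac, hbc⟩
    | exact Or.inr ⟨a, b, c, hab, hac, hbc⟩
    | skip
  all_goals exfalso; grind [SimpleGraph.Adj.ne, SimpleGraph.adj_symm]

end Copies

section ArrowNumber

variable {α W : Type*} {G G' G₁ G₂ : SimpleGraph α} {m k : ℕ}

theorem not_arrows_iff {V₁ V₂ : Type*} {K₁ : SimpleGraph V₁} {K₂ : SimpleGraph V₂} :
    ¬Arrows G K₁ K₂ ↔ ∃ R ≤ G, ¬ContainsCopy R K₁ ∧ ¬ContainsCopy (G \ R) K₂ := by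
  simp only [Arrows, not_forall, not_or, exists_prop]

theorem Arrows.mono {V₁ V₂ : Type*} {K₁ : SimpleGraph V₁} {K₂ : SimpleGraph V₂}
    (hGG' : G ≤ G') (h : Arrows G K₁ K₂) : Arrows G' K₁ K₂ := by
  intro R _
  have hblue : G \ (R ⊓ G) ≤ G' \ R := fun _ _ hxy => ⟨hGG' hxy.1, fun hR => hxy.2 ⟨hR, hxy.1⟩⟩
  exact (h (R ⊓ G) inf_le_right).imp (ContainsCopy.mono inf_le_left) (ContainsCopy.mono hblue)

theorem Arrows.of_map {V₁ V₂ : Type*} {K₁ : SimpleGraph V₁} {K₂ : SimpleGraph V₂}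
    {H : SimpleGraph W} (f : W ↪ α) (hK₁ : ∀ x, ∃ y, K₁.Adj x y) (hK₂ : ∀ x, ∃ y, K₂.Adj x y)
    (h : Arrows (H.map f) K₁ K₂) : Arrows H K₁ K₂ := by
  intro R hR
  have hblue : H.map f \ R.map f ≤ (H \ R).map f := fun x y ⟨hxy, hR⟩ => by
    obtain ⟨u, w, huw, rfl, rfl⟩ := (map_adj f H x y).1 hxy
    exact map_adj_apply.2 ⟨huw, fun hRuw => hR (map_adj_apply.2 hRuw)⟩
  exact (h (R.map f) (map_monotone f hR)).imp (·.of_map f hK₁) fun h => (h.mono hblue).of_map f hK₂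

theorem Arrows.matching_mono {V₂ : Type*} {K : SimpleGraph V₂}
    (h : Arrows G (Matching m) K) (hkm : k ≤ m) : Arrows G (Matching k) K := fun R hR =>
  (h R hR).imp_left (·.matching_mono hkm)

theorem arrows_matching_zero {V₂ : Type*} (K : SimpleGraph V₂) : Arrows G (Matching 0) K :=
  fun _ _ => Or.inl (containsCopy_iff_isContained.2 IsContained.of_isEmpty)

theorem exists_adj_matching (x : Fin m × Fin 2) : ∃ y, (Matching m).Adj x y :=
  ⟨(x.1, x.2 + 1), rfl, by rcases x with ⟨i, a⟩; fin_cases a <;> simp⟩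

theorem exists_adj_cycleGraph_three (x : Fin 3) : ∃ y, (cycleGraph 3).Adj x y :=
  ⟨x + 1, by rw [cycleGraph_three_eq_top]; fin_cases x <;> simp⟩

theorem Arrows.le_card [Finite α] (h : Arrows G (Matching m) (cycleGraph 3)) :
    m ≤ Nat.card α := by
  rcases h G le_rfl with hred | hblue
  · obtain ⟨f, -⟩ := containsCopy_matching_iff.1 hred
    have := Nat.card_le_card_of_injective f f.injective
    simp only [Nat.card_eq_fintype_card, Fintype.card_prod, Fintype.card_fin] at this ⊢
    omega
  · obtain ⟨a, b, -, hab, -⟩ := containsCopy_cycleGraph_three_iff.1 hblue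
    simp at hab

open scoped Classical in
/-- The largest `m` with `G → (mK₂, C₃)`; the search bound cuts nothing off, by `Arrows.le_card`. -/
noncomputable def arrowNumber (G : SimpleGraph α) : ℕ :=
  Nat.findGreatest (fun m => Arrows G (Matching m) (cycleGraph 3)) (Nat.card α)

variable [Finite α]

theorem arrows_iff_le_arrowNumber :
    Arrows G (Matching m) (cycleGraph 3) ↔ m ≤ arrowNumber G := by
  classical
  exact ⟨fun h => Nat.le_findGreatest h.le_card h, fun h =>
    (Nat.findGreatest_spec (P := fun m => Arrows G (Matching m) (cycleGraph 3)) (Nat.zero_le _)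
      (arrows_matching_zero _)).matching_mono h⟩

theorem arrowNumber_le_of_not_arrows (h : ¬Arrows G (Matching (k + 1)) (cycleGraph 3)) :
    arrowNumber G ≤ k := by
  rw [arrows_iff_le_arrowNumber] at h
  omega

theorem exists_colouring_arrowNumber :
    ∃ R ≤ G, ¬ContainsCopy R (Matching (arrowNumber G + 1)) ∧
      ¬ContainsCopy (G \ R) (cycleGraph 3) :=
  not_arrows_iff.1 fun h => by simpa using arrows_iff_le_arrowNumber.1 h

theorem Arrows.three_le_card (hm : 0 < m) (h : Arrows G (Matching m) (cycleGraph 3)) :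
    3 ≤ Nat.card α := by
  rcases h ⊥ bot_le with hred | ⟨f, hf⟩
  · exact absurd (hred.matching_mono hm) not_containsCopy_bot_matching
  · simpa using Nat.card_le_card_of_injective f hf

theorem arrowNumber_mono (h : G ≤ G') : arrowNumber G ≤ arrowNumber G' :=
  arrows_iff_le_arrowNumber.1 ((arrows_iff_le_arrowNumber.2 le_rfl).mono h)

theorem arrowNumber_map_le [Finite W] (f : W ↪ α) (H : SimpleGraph W) :
    arrowNumber (H.map f) ≤ arrowNumber H :=
  arrows_iff_le_arrowNumber.1 ((arrows_iff_le_arrowNumber.2 le_rfl).of_map f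
    exists_adj_matching exists_adj_cycleGraph_three)

theorem arrowNumber_bot : arrowNumber (⊥ : SimpleGraph α) = 0 :=
  Nat.le_zero.1 <| arrowNumber_le_of_not_arrows <| not_arrows_iff.2
    ⟨⊥, le_rfl, not_containsCopy_bot_matching, fun h => by
      obtain ⟨a, b, -, hab, -⟩ := containsCopy_cycleGraph_three_iff.1 h
      simp at hab⟩

theorem arrowNumber_sup_le (hsupp : (G₁.support ∩ G₂.support).Subsingleton) :
    arrowNumber (G₁ ⊔ G₂) ≤ arrowNumber G₁ + arrowNumber G₂ := by
  obtain ⟨R₁, hR₁, hred₁, hblue₁⟩ := exists_colouring_arrowNumber (G := G₁)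
  obtain ⟨R₂, hR₂, hred₂, hblue₂⟩ := exists_colouring_arrowNumber (G := G₂)
  refine arrowNumber_le_of_not_arrows <| not_arrows_iff.2
    ⟨R₁ ⊔ R₂, sup_le_sup hR₁ hR₂, not_containsCopy_matching_sup hred₁ hred₂, fun h => ?_⟩
  have hblue : (G₁ ⊔ G₂) \ (R₁ ⊔ R₂) ≤ (G₁ \ R₁) ⊔ (G₂ \ R₂) := fun x y hxy => by
    simp only [sdiff_adj, sup_adj, not_or] at hxy ⊢
    tauto
  exact ((h.mono hblue).cycleGraph_three_of_sup (hsupp.anti (Set.inter_subset_inter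
    (support_mono sdiff_le) (support_mono sdiff_le)))).elim hblue₁ hblue₂

end ArrowNumber

section InducedSubgraphs

variable {V W : Type*} {G G₁ G₂ : SimpleGraph V} {s t : Set V} {v x : V}

@[simp]
theorem spanningCoe_induce_adj {x y : V} :
    (G.induce s).spanningCoe.Adj x y ↔ G.Adj x y ∧ x ∈ s ∧ y ∈ s := by
  simp only [map_adj, comap_adj, Function.Embedding.subtype_apply, Subtype.exists]
  exact ⟨fun ⟨_, hx, _, hy, h, hxe, hye⟩ => hxe ▸ hye ▸ ⟨h, hx, hy⟩,
    fun ⟨h, hx, hy⟩ => ⟨x, hx, y, hy, h, rfl, rfl⟩⟩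

theorem support_spanningCoe_induce_subset : (G.induce s).spanningCoe.support ⊆ s :=
  fun _ ⟨_, h⟩ => (spanningCoe_induce_adj.1 h).2.1

theorem spanningCoe_induce_mono (h : s ⊆ t) :
    (G.induce s).spanningCoe ≤ (G.induce t).spanningCoe := fun _ _ hxy => by
  rw [spanningCoe_induce_adj] at hxy ⊢
  exact ⟨hxy.1, h hxy.2.1, h hxy.2.2⟩

theorem ncard_edgeSet_map (f : W ↪ V) (H : SimpleGraph W) :
    (H.map f).edgeSet.ncard = H.edgeSet.ncard := by
  rw [edgeSet_map, Set.ncard_image_of_injective _ f.sym2Map.injective]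

variable [Finite V]

theorem ncard_edgeSet_sup (hsupp : (G₁.support ∩ G₂.support).Subsingleton) :
    (G₁ ⊔ G₂).edgeSet.ncard = G₁.edgeSet.ncard + G₂.edgeSet.ncard := by
  refine edgeSet_sup G₁ G₂ ▸ Set.ncard_union_eq (Set.disjoint_left.2 fun e h₁ h₂ => ?_)
  induction e using Sym2.ind with
  | _ x y => exact h₁.ne (hsupp ⟨⟨y, h₁⟩, ⟨y, h₂⟩⟩ ⟨⟨x, h₁.symm⟩, ⟨x, h₂.symm⟩⟩)

theorem ncard_edgeSet_induce_add_le (hst : (s ∩ t).Subsingleton) :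
    (G.induce s).spanningCoe.edgeSet.ncard + (G.induce t).spanningCoe.edgeSet.ncard ≤
      (G.induce (s ∪ t)).spanningCoe.edgeSet.ncard := by
  rw [← ncard_edgeSet_sup (hst.anti (Set.inter_subset_inter support_spanningCoe_induce_subset
    support_spanningCoe_induce_subset))]
  exact Set.ncard_le_ncard (edgeSet_subset_edgeSet.2 (sup_le
    (spanningCoe_induce_mono Set.subset_union_left)
    (spanningCoe_induce_mono Set.subset_union_right)))

theorem arrowNumber_induce_union_le (hst : (s ∩ t).Subsingleton)
    (hadj : ∀ x ∈ s, ∀ y ∈ t, G.Adj x y → x ∈ t ∨ y ∈ s) :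
    arrowNumber (G.induce (s ∪ t)).spanningCoe ≤
      arrowNumber (G.induce s).spanningCoe + arrowNumber (G.induce t).spanningCoe := by
  have hle : (G.induce (s ∪ t)).spanningCoe ≤
      (G.induce s).spanningCoe ⊔ (G.induce t).spanningCoe := by
    intro x y hxy
    simp only [spanningCoe_induce_adj, sup_adj, Set.mem_union] at hxy ⊢
    obtain ⟨hxy, hx | hx, hy | hy⟩ := hxy
    · exact Or.inl ⟨hxy, hx, hy⟩
    · rcases hadj x hx y hy hxy with h | h
      exacts [Or.inr ⟨hxy, h, hy⟩, Or.inl ⟨hxy, hx, h⟩]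
    · rcases hadj y hy x hx hxy.symm with h | h
      exacts [Or.inr ⟨hxy, hx, h⟩, Or.inl ⟨hxy, h, hy⟩]
    · exact Or.inr ⟨hxy, hx, hy⟩
  exact (arrowNumber_mono hle).trans (arrowNumber_sup_le (hst.anti (Set.inter_subset_inter
    support_spanningCoe_induce_subset support_spanningCoe_induce_subset)))

theorem ncard_edgeSet_induce_lt_insert (hx : x ∈ s) (hv : v ∉ s) (hxv : G.Adj x v) :
    (G.induce s).spanningCoe.edgeSet.ncard < (G.induce (insert v s)).spanningCoe.edgeSet.ncard := by
  refine Set.ncard_lt_ncard (edgeSet_ssubset_edgeSet.2 (lt_of_le_of_ne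
    (spanningCoe_induce_mono (Set.subset_insert v s)) fun h => hv ?_))
  have hxv' : (G.induce (insert v s)).spanningCoe.Adj x v :=
    spanningCoe_induce_adj.2 ⟨hxv, Or.inr hx, Or.inl rfl⟩
  rw [← h, spanningCoe_induce_adj] at hxv'
  exact hxv'.2.2

theorem arrowNumber_induce_union_le_of_disjoint (hst : Disjoint s t)
    (hno : ∀ x ∈ s, ∀ y ∈ t, ¬G.Adj x y) :
    arrowNumber (G.induce (s ∪ t)).spanningCoe ≤
      arrowNumber (G.induce s).spanningCoe + arrowNumber (G.induce t).spanningCoe :=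
  arrowNumber_induce_union_le (hst.inter_eq ▸ Set.subsingleton_empty)
    fun x hx y hy hxy => (hno x hx y hy hxy).elim

theorem arrowNumber_le_induce_compl_singleton_add_one (v : V) :
    arrowNumber G ≤ arrowNumber (G.induce {v}ᶜ).spanningCoe + 1 := by
  set H := (G.induce {v}ᶜ).spanningCoe
  obtain ⟨R, hRH, hred, hblue⟩ := exists_colouring_arrowNumber (G := H)
  have hstar : ∀ x y, (G \ H).Adj x y → x = v ∨ y = v := fun x y ⟨hxy, hH⟩ => by
    by_contra! hxy'
    exact hH (spanningCoe_induce_adj.2 ⟨hxy, hxy'⟩)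
  have hblue' : G \ (R ⊔ (G \ H)) ≤ H \ R := fun x y ⟨hxy, hR⟩ => by
    simp only [sup_adj, sdiff_adj, not_or, not_and, not_not] at hR
    exact ⟨hR.2 hxy, hR.1⟩
  refine arrowNumber_le_of_not_arrows <| not_arrows_iff.2
    ⟨R ⊔ (G \ H), sup_le (hRH.trans (spanningCoe_induce_le _ _)) sdiff_le,
      not_containsCopy_matching_sup hred (not_containsCopy_matching_two_of_star hstar),
      fun h => hblue (h.mono hblue')⟩

end InducedSubgraphs

section Separation

variable {V : Type*} {G : SimpleGraph V} {v : V} {s t u : Set V}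

theorem exists_split_of_not_connected_induce (hs : s.Nonempty)
    (h : ¬(G.induce s).Connected) :
    ∃ t u : Set V, t.Nonempty ∧ u.Nonempty ∧ Disjoint t u ∧ t ∪ u = s ∧
      ∀ x ∈ t, ∀ y ∈ u, ¬G.Adj x y := by
  have : Nonempty s := hs.to_subtype
  obtain ⟨a, b, hab⟩ : ∃ a b : s, ¬(G.induce s).Reachable a b := by
    simpa [connected_iff, Preconnected] using h
  set t := {x | ∃ hx : x ∈ s, (G.induce s).Reachable a ⟨x, hx⟩}
  have hts : t ⊆ s := fun x ⟨hx, _⟩ => hx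
  refine ⟨t, s \ t, ⟨a, a.2, .rfl⟩, ⟨b, b.2, fun ⟨_, hb⟩ => hab hb⟩, Set.disjoint_sdiff_right,
    Set.union_sdiff_cancel hts, fun x ⟨hx, hax⟩ y ⟨hy, hyt⟩ hxy => hyt ⟨hy, ?_⟩⟩
  exact hax.trans (Adj.reachable (by simpa using hxy))

/-- `s` is a union of connected components of `G - v`. -/
def IsSeparatedBy (G : SimpleGraph V) (v : V) (s : Set V) : Prop :=
  v ∉ s ∧ ∀ x ∈ s, ∀ y, G.Adj x y → y = v ∨ y ∈ s

theorem isSeparatedBy_compl_singleton (G : SimpleGraph V) (v : V) : IsSeparatedBy G v {v}ᶜ :=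
  ⟨fun h => h rfl, fun _ _ y _ => em (y = v)⟩

theorem IsSeparatedBy.left_of_union (hs : IsSeparatedBy G v (t ∪ u))
    (hno : ∀ x ∈ t, ∀ y ∈ u, ¬G.Adj x y) : IsSeparatedBy G v t := by
  refine ⟨fun hv => hs.1 (Or.inl hv), fun x hx y hxy => ?_⟩
  rcases hs.2 x (Or.inl hx) y hxy with hy | hy | hy
  exacts [Or.inl hy, Or.inr hy, (hno x hx y hy hxy).elim]

theorem IsSeparatedBy.right_of_union (hs : IsSeparatedBy G v (t ∪ u))
    (hno : ∀ x ∈ t, ∀ y ∈ u, ¬G.Adj x y) : IsSeparatedBy G v u :=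
  (Set.union_comm t u ▸ hs).left_of_union fun y hy x hx hxy => hno x hx y hy hxy.symm

theorem IsSeparatedBy.exists_adj (hconn : G.Connected) (hs : IsSeparatedBy G v s)
    (hne : s.Nonempty) : ∃ x ∈ s, G.Adj x v := by
  obtain ⟨x, hx⟩ := hne
  obtain ⟨d, -, hd, hd'⟩ := (hconn.preconnected x v).some.exists_boundary_dart s hx hs.1
  obtain rfl := (hs.2 _ hd _ d.adj).resolve_right hd'
  exact ⟨_, hd, d.adj⟩

theorem subsingleton_insert_inter_insert (h : Disjoint t u) :
    (insert v t ∩ insert v u).Subsingleton := by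
  rw [← Set.insert_inter_distrib, h.inter_eq, insert_empty_eq]
  exact Set.subsingleton_singleton

theorem insert_ne_univ_of_disjoint (h : Disjoint t u) (hv : v ∉ u) (hu : u.Nonempty) :
    insert v t ≠ Set.univ := fun htu => by
  obtain ⟨y, hy⟩ := hu
  rcases htu ▸ Set.mem_univ y with rfl | hyt
  exacts [hv hy, Set.disjoint_left.1 h hyt hy]

theorem insert_union_insert_eq_univ (htu : t ∪ u = {v}ᶜ) : insert v t ∪ insert v u = Set.univ := by
  rw [← Set.insert_union_distrib, htu]
  ext
  simp [eq_or_ne]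

variable [Finite V]

theorem arrowNumber_le_induce_add_induce_add_one (htu : Disjoint t u) (hcover : t ∪ u = {v}ᶜ)
    (hno : ∀ x ∈ t, ∀ y ∈ u, ¬G.Adj x y) :
    arrowNumber G ≤
      arrowNumber (G.induce t).spanningCoe + arrowNumber (G.induce u).spanningCoe + 1 := by
  have := arrowNumber_le_induce_compl_singleton_add_one (G := G) v
  have := hcover ▸ arrowNumber_induce_union_le_of_disjoint htu hno
  omega

theorem arrowNumber_le_induce_insert_add_induce_insert (htu : Disjoint t u)
    (hcover : t ∪ u = {v}ᶜ) (hno : ∀ x ∈ t, ∀ y ∈ u, ¬G.Adj x y) :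
    arrowNumber G ≤ arrowNumber (G.induce (insert v t)).spanningCoe +
      arrowNumber (G.induce (insert v u)).spanningCoe := by
  have := arrowNumber_induce_union_le (G := G) (subsingleton_insert_inter_insert (v := v) htu)
    (by rintro x (rfl | hx) y (rfl | hy) hxy <;> simp_all)
  rwa [insert_union_insert_eq_univ hcover, spanningCoe_induce_univ] at this

theorem ncard_edgeSet_induce_insert_add_le (htu : Disjoint t u) (hcover : t ∪ u = {v}ᶜ) :
    (G.induce (insert v t)).spanningCoe.edgeSet.ncard +
      (G.induce (insert v u)).spanningCoe.edgeSet.ncard ≤ G.edgeSet.ncard := by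
  have := ncard_edgeSet_induce_add_le (G := G) (subsingleton_insert_inter_insert (v := v) htu)
  rwa [insert_union_insert_eq_univ hcover, spanningCoe_induce_univ] at this

end Separation

section Minimality

variable {V : Type} [Finite V] {G : SimpleGraph V} {v : V} {s : Set V}

theorem four_mul_arrowNumber_induce_le
    (hmin : ∀ k : ℕ, 0 < k → ∀ (W : Type), Finite W → ∀ H : SimpleGraph W, H.Connected →
      Nat.card W < Nat.card V → H.edgeSet.ncard ≤ 4 * k - 2 →
      ¬Arrows H (Matching k) (cycleGraph 3))
    (hs : s ≠ Set.univ) (hconn : (G.induce s).Connected) :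
    4 * arrowNumber (G.induce s).spanningCoe ≤ (G.induce s).spanningCoe.edgeSet.ncard + 1 := by
  set k := arrowNumber (G.induce s).spanningCoe
  have harrow : Arrows (G.induce s) (Matching k) (cycleGraph 3) :=
    arrows_iff_le_arrowNumber.2 (arrowNumber_map_le _ _)
  have hcard : Nat.card s < Nat.card V := by
    simpa [Nat.card_coe_set_eq] using Set.ncard_lt_card hs
  rw [ncard_edgeSet_map]
  by_contra! hk
  exact hmin k (by omega) s inferInstance _ hconn hcard (by omega) harrow

theorem IsSeparatedBy.connected_induce_insert_and_four_mul_arrowNumber_le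
    (hconn : G.Connected)
    (hsmall : ∀ s : Set V, s ≠ Set.univ → (G.induce s).Connected →
      4 * arrowNumber (G.induce s).spanningCoe ≤ (G.induce s).spanningCoe.edgeSet.ncard + 1)
    (hs : IsSeparatedBy G v s) :
    (G.induce (insert v s)).Connected ∧
      4 * arrowNumber (G.induce s).spanningCoe ≤
        (G.induce (insert v s)).spanningCoe.edgeSet.ncard := by
  induction hN : s.ncard using Nat.strong_induction_on generalizing s with
  | _ N ih =>
  rcases s.eq_empty_or_nonempty with rfl | hne
  · have hbot : (G.induce ∅).spanningCoe = ⊥ := by ext; simp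
    refine ⟨?_, by simp [hbot, arrowNumber_bot]⟩
    rw [insert_empty_eq, induce_singleton_eq_top]
    exact connected_top
  by_cases hconnS : (G.induce s).Connected
  · obtain ⟨x, hx, hxv⟩ := hs.exists_adj hconn hne
    have hlt := ncard_edgeSet_induce_lt_insert hx hs.1 hxv
    have := hsmall s (fun h => hs.1 (h ▸ Set.mem_univ v)) hconnS
    refine ⟨?_, by omega⟩
    rw [← Set.union_singleton]
    exact connected_induce_union hconnS.preconnected (by simp) hx (Set.mem_singleton v) hxv
  obtain ⟨t, u, ht, hu, htu, rfl, hno⟩ := exists_split_of_not_connected_induce hne hconnS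
  have hcard := Set.ncard_union_eq htu
  have := ht.ncard_pos
  have := hu.ncard_pos
  obtain ⟨hconn_t, hedge_t⟩ := ih t.ncard (by omega) (hs.left_of_union hno) rfl
  obtain ⟨hconn_u, hedge_u⟩ := ih u.ncard (by omega) (hs.right_of_union hno) rfl
  have hκ := arrowNumber_induce_union_le_of_disjoint htu hno
  have hedge := ncard_edgeSet_induce_add_le (G := G) (subsingleton_insert_inter_insert (v := v) htu)
  rw [← Set.insert_union_distrib] at hedge
  refine ⟨?_, by omega⟩
  rw [Set.insert_union_distrib]
  exact induce_union_connected hconn_t.preconnected hconn_u.preconnected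
    ⟨v, Set.mem_insert v t, Set.mem_insert v u⟩

end Minimality

/-- Under the minimality hypotheses, `G` is 2-connected: it has at least
three vertices and deleting any single vertex leaves a connected graph. -/
theorem two_connected (n : ℕ) (hn : 0 < n) (V : Type) [Finite V]
    (G : SimpleGraph V) (hconn : G.Connected) (hE : G.edgeSet.ncard ≤ 4 * n - 2)
    (harrow : Arrows G (Matching n) (cycleGraph 3))
    (hmin : ∀ k : ℕ, 0 < k → ∀ (W : Type), Finite W → ∀ H : SimpleGraph W,
      H.Connected →
      (Nat.card W < Nat.card V ∨
        (Nat.card W = Nat.card V ∧ H.edgeSet.ncard < G.edgeSet.ncard)) →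
      H.edgeSet.ncard ≤ 4 * k - 2 →
      ¬ Arrows H (Matching k) (cycleGraph 3)) :
    3 ≤ Nat.card V ∧ ∀ v : V, (G.induce {w | w ≠ v}).Connected := by
  have hV := harrow.three_le_card hn
  refine ⟨hV, fun v => by_contra fun hdisc => ?_⟩
  have : Nontrivial V := Finite.one_lt_card_iff_nontrivial.1 (by omega)
  obtain ⟨A, B, hA, hB, hAB, hcover, hno⟩ :=
    exists_split_of_not_connected_induce (s := {v}ᶜ) (exists_ne v) hdisc
  have hsmall := fun s => four_mul_arrowNumber_induce_le (G := G) (s := s)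
    fun k hk W _ H hH hW => hmin k hk W ‹_› H hH (Or.inl hW)
  have hsepA := (hcover ▸ isSeparatedBy_compl_singleton G v).left_of_union hno
  have hsepB := (hcover ▸ isSeparatedBy_compl_singleton G v).right_of_union hno
  obtain ⟨hconnA, hedgeA⟩ :=
    hsepA.connected_induce_insert_and_four_mul_arrowNumber_le hconn hsmall
  obtain ⟨hconnB, hedgeB⟩ :=
    hsepB.connected_induce_insert_and_four_mul_arrowNumber_le hconn hsmall
  have := hsmall _ (insert_ne_univ_of_disjoint hAB hsepB.1 hB) hconnA
  have := hsmall _ (insert_ne_univ_of_disjoint hAB.symm hsepA.1 hA) hconnB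
  have := arrowNumber_le_induce_add_induce_add_one hAB hcover hno
  have := arrowNumber_le_induce_insert_add_induce_insert hAB hcover hno
  have := ncard_edgeSet_induce_insert_add_le (G := G) hAB hcover
  have := arrows_iff_le_arrowNumber.1 harrow
  omega
end
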